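/- Let r : 𝔤* → 𝔤 be a skew-symmetric solution of the classical Yang–Baxter equation, and equip 𝔤* with the left symmetric product αβ := ad*_{r(α)}β. Then the trace of the right multiplication R_α : β ↦ βα = ad*_{r(β)}α vanishes for every α ∈ 𝔤* if and only if for every α ∈ 𝔤* the endomorphism of the Lie subalgebra Im(r) ⊆ 𝔤 given by y ↦ [r(α), y] has trace zero (i.e. the quotient Lie algebra 𝔤*/Ker(r) ≅ Im(r) is unimodular). -/

import Mathlib

/-- The coadjoint action of `x : L` on the dual: `⟨coad x α, y⟩ = -⟨α, [x,y]⟩`. -/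
noncomputable def coad {L : Type*} [LieRing L] [LieAlgebra ℝ L]
    (x : L) (α : Module.Dual ℝ L) : Module.Dual ℝ L :=
  -(α ∘ₗ (LieAlgebra.ad ℝ L x))

/-- `[r,r](α,β,γ) := ⟨γ,[r α, r β]⟩ + ⟨α,[r β, r γ]⟩ + ⟨β,[r γ, r α]⟩`. -/
def cybe {L : Type*} [LieRing L] [LieAlgebra ℝ L]
    (r : Module.Dual ℝ L →ₗ[ℝ] L) (α β γ : Module.Dual ℝ L) : ℝ :=
  γ ⁅r α, r β⁆ + α ⁅r β, r γ⁆ + β ⁅r γ, r α⁆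

/-!
Write `W = Im r`, `S_α = ad (r α)|_W` and `R_α = (x ↦ ad*_x α) ∘ r`. By skew-symmetry `ker r` is the
annihilator of `W`, so restriction `β ↦ β|_W` induces an isomorphism `Ω : W ≃ W*` with
`Ω (r β) = β|_W`. Cycling the trace, `tr R_α = tr T_α` with `T_α = r ∘ (x ↦ ad*_x α)` on `W`.
The CYBE gives `r (ad*_{r α} β) = [r α, r β] + r (ad*_{r β} α)`, i.e.
`(S_α + T_α) (r β) = r (ad*_{r α} β)`, and `Ω` carries this map to `-S_αᵀ`. Hence
`tr S_α + tr T_α = -tr S_α`, so `tr R_α = -2 tr S_α`.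
-/

namespace LinearMap

theorem exists_linearEquiv_comp_eq_of_ker_eq {R M N P : Type*} [Ring R]
    [AddCommGroup M] [Module R M] [AddCommGroup N] [Module R N] [AddCommGroup P] [Module R P]
    {f : M →ₗ[R] N} {g : M →ₗ[R] P} (hf : Function.Surjective f) (hg : Function.Surjective g)
    (h : ker f = ker g) : ∃ e : N ≃ₗ[R] P, ∀ x, e (f x) = g x :=
  ⟨(f.quotKerEquivOfSurjective hf).symm ≪≫ₗ Submodule.quotEquivOfEq _ _ h ≪≫ₗ
      g.quotKerEquivOfSurjective hg, fun x => by
    rw [LinearEquiv.trans_apply, LinearEquiv.trans_apply, ← quotKerEquivOfSurjective_apply_mk f hf,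
      LinearEquiv.symm_apply_apply, Submodule.quotEquivOfEq_mk, quotKerEquivOfSurjective_apply_mk]⟩

theorem trace_eq_neg_trace_of_conj_eq_neg_dualMap {K V : Type*} [Field K] [AddCommGroup V]
    [Module K V] [FiniteDimensional K V] (e : V ≃ₗ[K] Module.Dual K V) {A B : V →ₗ[K] V}
    (h : ∀ v, e (A v) = -B.dualMap (e v)) : trace K V A = -trace K V B := by
  have hconj : e.conj A = -B.dualMap := by
    ext w : 1
    simpa [LinearEquiv.conj_apply] using h (e.symm w)
  rw [← trace_conj' A e, hconj, dualMap_def, ← trace_transpose' B]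
  exact map_neg (trace K (Module.Dual K V)) _

end LinearMap

section Coadjoint

variable {L : Type*} [LieRing L] [LieAlgebra ℝ L]

theorem coad_apply (x : L) (α : Module.Dual ℝ L) (y : L) : coad x α y = -α ⁅x, y⁆ := by
  simp [coad]

noncomputable def coadRight (α : Module.Dual ℝ L) : L →ₗ[ℝ] Module.Dual ℝ L where
  toFun x := coad x α
  map_add' x y := by ext z; simp [coad_apply, add_lie]; ring
  map_smul' c x := by ext z; simp [coad_apply, smul_lie]

end Coadjoint

section YangBaxter

variable {L : Type*} [LieRing L] [LieAlgebra ℝ L] {r : Module.Dual ℝ L →ₗ[ℝ] L}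

theorem ker_rangeRestrict_eq_ker_dualMap_subtype
    (hskew : ∀ α β : Module.Dual ℝ L, α (r β) = -β (r α)) :
    LinearMap.ker r.rangeRestrict = LinearMap.ker (LinearMap.range r).subtype.dualMap := by
  ext β
  simp only [LinearMap.ker_rangeRestrict, LinearMap.mem_ker]
  constructor
  · intro hβ
    ext ⟨_, γ, rfl⟩
    simp [hskew β γ, hβ]
  · intro hβ
    refine (Module.forall_dual_apply_eq_zero_iff ℝ _).mp fun γ => ?_
    have hβγ : β (r γ) = 0 := LinearMap.congr_fun hβ ⟨r γ, γ, rfl⟩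
    rw [hskew γ β, hβγ, neg_zero]

/-- `r` maps the commutator of the left-symmetric product to the Lie bracket. -/
theorem apply_coad_eq (hskew : ∀ α β : Module.Dual ℝ L, α (r β) = -β (r α))
    (hcybe : ∀ α β γ : Module.Dual ℝ L, cybe r α β γ = 0) (α β : Module.Dual ℝ L) :
    r (coad (r α) β) = ⁅r α, r β⁆ + r (coad (r β) α) := by
  rw [← sub_eq_zero, ← Module.forall_dual_apply_eq_zero_iff ℝ]
  intro γ
  have h := hcybe α β γ
  rw [cybe, ← lie_skew (r γ), map_neg] at h
  simp only [map_sub, map_add, hskew γ, coad_apply]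
  linarith

theorem trace_coadRight_comp_eq [FiniteDimensional ℝ L]
    (hskew : ∀ α β : Module.Dual ℝ L, α (r β) = -β (r α))
    (hcybe : ∀ α β γ : Module.Dual ℝ L, cybe r α β γ = 0) (α : Module.Dual ℝ L)
    {S : LinearMap.range r →ₗ[ℝ] LinearMap.range r} (hS : ∀ y, (S y : L) = ⁅r α, (y : L)⁆) :
    LinearMap.trace ℝ _ (coadRight α ∘ₗ r) = -2 * LinearMap.trace ℝ _ S := by
  set T := r.rangeRestrict ∘ₗ coadRight α ∘ₗ (LinearMap.range r).subtype
  have hT : LinearMap.trace ℝ _ (coadRight α ∘ₗ r) = LinearMap.trace ℝ _ T :=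
    LinearMap.trace_comp_comm' r.rangeRestrict (coadRight α ∘ₗ (LinearMap.range r).subtype)
  obtain ⟨Ω, hΩ⟩ := LinearMap.exists_linearEquiv_comp_eq_of_ker_eq r.surjective_rangeRestrict
    (LinearMap.dualMap_surjective_of_injective (LinearMap.range r).injective_subtype)
    (ker_rangeRestrict_eq_ker_dualMap_subtype hskew)
  have hST : LinearMap.trace ℝ _ (S + T) = -LinearMap.trace ℝ _ S := by
    refine LinearMap.trace_eq_neg_trace_of_conj_eq_neg_dualMap Ω fun u => ?_
    obtain ⟨β, rfl⟩ := r.surjective_rangeRestrict u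
    have hsum : (S + T) (r.rangeRestrict β) = r.rangeRestrict (coad (r α) β) :=
      Subtype.ext <| by
        rw [LinearMap.add_apply, Submodule.coe_add, hS]
        exact (apply_coad_eq hskew hcybe α β).symm
    rw [hsum, hΩ, hΩ]
    ext v
    simp [coad_apply, hS]
  rw [map_add] at hST
  rw [hT]
  linarith

end YangBaxter

/-- for a skew-symmetric solution `r` of the CYBE, all right
multiplications `R_α : β ↦ ad*_{r β} α` of the LSA `(𝔤*, αβ = ad*_{r α} β)` have zero
trace iff for every `α` the endomorphism `y ↦ [r α, y]` of the Lie subalgebra `Im r`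
has zero trace (i.e. `𝔤*/Ker r ≅ Im r` is unimodular). -/
theorem stmt5 {L : Type*} [LieRing L] [LieAlgebra ℝ L] [FiniteDimensional ℝ L]
    (r : Module.Dual ℝ L →ₗ[ℝ] L)
    (hskew : ∀ α β : Module.Dual ℝ L, α (r β) = - β (r α))
    (hcybe : ∀ α β γ : Module.Dual ℝ L, cybe r α β γ = 0)
    (Rf : Module.Dual ℝ L → (Module.Dual ℝ L →ₗ[ℝ] Module.Dual ℝ L))
    (Sf : Module.Dual ℝ L → (LinearMap.range r →ₗ[ℝ] LinearMap.range r))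
    (hRf : ∀ α β : Module.Dual ℝ L, Rf α β = coad (r β) α)
    (hSf : ∀ (α : Module.Dual ℝ L) (y : LinearMap.range r),
      (Sf α y : L) = ⁅r α, (y : L)⁆) :
    (∀ α : Module.Dual ℝ L, LinearMap.trace ℝ (Module.Dual ℝ L) (Rf α) = 0) ↔
    (∀ α : Module.Dual ℝ L, LinearMap.trace ℝ (LinearMap.range r) (Sf α) = 0) := by
  have htrace : ∀ α, LinearMap.trace ℝ _ (Rf α) = -2 * LinearMap.trace ℝ _ (Sf α) := by
    intro α
    rw [show Rf α = coadRight α ∘ₗ r from LinearMap.ext (hRf α)]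
    exact trace_coadRight_comp_eq hskew hcybe α (hSf α)
  simp [htrace]
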